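/- arXiv:1610.02739 — 2 statements merged into one kernel-verified Lean document; each statement's English description precedes it below -/
import Mathlib

section
/- For any Hermitian metric ω (not necessarily conformally balanced) on a complex manifold, the Chern Laplacian of the torsion satisfies (ΔT)_{p̄jq} = ∇_q R̃_{p̄j} - ∇_j R̃_{p̄q} + T^r{}_{qλ} R^λ{}_{r p̄j} - T^r{}_{jλ} R^λ{}_{r p̄q}, where Δ = g^{λμ̄}∇_λ∇_{μ̄} and R̃_{p̄j} = g^{λμ̄} R_{μ̄λ p̄ j}. -/
noncomputable section
open Complex

/-- Wirtinger derivative `∂f/∂z_j`. -/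
def Dh {m : ℕ} (j : Fin m) (f : (Fin m → ℂ) → ℂ) : (Fin m → ℂ) → ℂ :=
  fun z =>
    (fderiv ℝ f z (Pi.single j 1) - Complex.I * fderiv ℝ f z (Pi.single j Complex.I)) / 2

/-- Wirtinger derivative `∂f/∂z̄_j`. -/
def Da {m : ℕ} (j : Fin m) (f : (Fin m → ℂ) → ℂ) : (Fin m → ℂ) → ℂ :=
  fun z =>
    (fderiv ℝ f z (Pi.single j 1) + Complex.I * fderiv ℝ f z (Pi.single j Complex.I)) / 2

/-- Chern torsion `T_{k̄ j n} = ∂_j g_{k̄ n} - ∂_n g_{k̄ j}`. -/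
def Tor {m : ℕ} (g : Fin m → Fin m → (Fin m → ℂ) → ℂ) (k j n : Fin m) :
    (Fin m → ℂ) → ℂ :=
  fun x => Dh j (g k n) x - Dh n (g k j) x

/-- Conjugate torsion `T̄_{k j̄ n̄} = ∂_{j̄} g_{n̄ k} - ∂_{n̄} g_{j̄ k}`. -/
def TorB {m : ℕ} (g : Fin m → Fin m → (Fin m → ℂ) → ℂ) (k j n : Fin m) :
    (Fin m → ℂ) → ℂ :=
  fun x => Da j (g n k) x - Da n (g j k) x

/-- Traced torsion `T_q = g^{j k̄} T_{k̄ j q}`. -/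
def Ttr {m : ℕ} (g gi : Fin m → Fin m → (Fin m → ℂ) → ℂ) (q : Fin m) :
    (Fin m → ℂ) → ℂ :=
  fun x => ∑ j : Fin m, ∑ k : Fin m, gi j k x * Tor g k j q x

/-- Traced conjugate torsion `T̄_{q̄} = g^{j̄ k} T̄_{k j̄ q̄}`. -/
def TtrB {m : ℕ} (g gi : Fin m → Fin m → (Fin m → ℂ) → ℂ) (q : Fin m) :
    (Fin m → ℂ) → ℂ :=
  fun x => ∑ k : Fin m, ∑ j : Fin m, gi k j x * TorB g k j q x

/-- Chern curvature with all indices lowered: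
`R_{k̄ j ℓ̄ n} = -∂_{k̄}∂_j g_{ℓ̄ n} + g^{s r̄} ∂_{k̄} g_{ℓ̄ s} ∂_j g_{r̄ n}`. -/
def Rlow {m : ℕ} (g gi : Fin m → Fin m → (Fin m → ℂ) → ℂ) (k j l n : Fin m) :
    (Fin m → ℂ) → ℂ :=
  fun x =>
    -(Da k (fun y => Dh j (g l n) y) x) +
      ∑ s : Fin m, ∑ r : Fin m, gi s r x * Da k (g l s) x * Dh j (g r n) x

/-- Chern curvature `R_{k̄ j}{}^p{}_q = -∂_{k̄}(g^{p s̄} ∂_j g_{s̄ q})`. -/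
def Rmix {m : ℕ} (g gi : Fin m → Fin m → (Fin m → ℂ) → ℂ) (k j p q : Fin m) :
    (Fin m → ℂ) → ℂ :=
  fun x => -(Da k (fun y => ∑ s : Fin m, gi p s y * Dh j (g s q) y) x)

/-- Chern connection coefficient `A^p_{d q} = g^{p s̄} ∂_d g_{s̄ q}`. -/
def Achr {m : ℕ} (g gi : Fin m → Fin m → (Fin m → ℂ) → ℂ) (d q p : Fin m) :
    (Fin m → ℂ) → ℂ :=
  fun x => ∑ s : Fin m, gi p s x * Dh d (g s q) x

/-- Conjugate connection coefficient `Γ̄^{p̄}_{d̄ k̄} = g^{s p̄} ∂_{d̄} g_{k̄ s}`. -/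
def AchrB {m : ℕ} (g gi : Fin m → Fin m → (Fin m → ℂ) → ℂ) (d k p : Fin m) :
    (Fin m → ℂ) → ℂ :=
  fun x => ∑ s : Fin m, gi s p x * Da d (g k s) x

/-- First Chern–Ricci curvature `R_{k̄j} = -∂_{k̄}∂_j log det g`. -/
def RicFirst {m : ℕ} (g gi : Fin m → Fin m → (Fin m → ℂ) → ℂ) (k j : Fin m) :
    (Fin m → ℂ) → ℂ :=
  fun x => -(Da k (fun y => ∑ p : Fin m, ∑ s : Fin m, gi p s y * Dh j (g s p) y) x)

/-- `R_{k̄j} = R_{k̄j}{}^p{}_p`. -/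
def RicTrace {m : ℕ} (g gi : Fin m → Fin m → (Fin m → ℂ) → ℂ) (k j : Fin m) :
    (Fin m → ℂ) → ℂ :=
  fun x => ∑ p : Fin m, ∑ l : Fin m, gi p l x * Rlow g gi k j l p x

/-- Second Chern–Ricci curvature `R̃_{k̄j} = R^p{}_{p k̄ j}`. -/
def RicSecond {m : ℕ} (g gi : Fin m → Fin m → (Fin m → ℂ) → ℂ) (k j : Fin m) :
    (Fin m → ℂ) → ℂ :=
  fun x => ∑ p : Fin m, ∑ q : Fin m, gi p q x * Rlow g gi q p k j x

/-- Third Chern–Ricci curvature `R'_{k̄j} = R_{k̄}{}^p{}_{p j}`. -/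
def RicThird {m : ℕ} (g gi : Fin m → Fin m → (Fin m → ℂ) → ℂ) (k j : Fin m) :
    (Fin m → ℂ) → ℂ :=
  fun x => ∑ p : Fin m, ∑ l : Fin m, gi p l x * Rlow g gi k p l j x

/-- Fourth Chern–Ricci curvature `R''_{k̄j} = R^p{}_{j k̄ p}`. -/
def RicFourth {m : ℕ} (g gi : Fin m → Fin m → (Fin m → ℂ) → ℂ) (k j : Fin m) :
    (Fin m → ℂ) → ℂ :=
  fun x => ∑ p : Fin m, ∑ l : Fin m, gi p l x * Rlow g gi l j k p x

/-- Components of a `(p,q)`-form on `ℂ^μ` (first tuple: unbarred indices,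
second tuple: barred indices). -/
abbrev PQForm (μ p q : ℕ) : Type :=
  (Fin p → Fin μ) → (Fin q → Fin μ) → (Fin μ → ℂ) → ℂ

/-- Wedge product of forms in components. -/
def wedgePQ {μ p1 q1 p2 q2 : ℕ} (α : PQForm μ p1 q1) (β : PQForm μ p2 q2) :
    PQForm μ (p1 + p2) (q1 + q2) :=
  fun J K x =>
    (((p1.factorial * p2.factorial * q1.factorial * q2.factorial : ℕ) : ℂ))⁻¹ *
      ∑ σ : Equiv.Perm (Fin (p1 + p2)), ∑ τ : Equiv.Perm (Fin (q1 + q2)),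
        ((Equiv.Perm.sign σ : ℤ) : ℂ) * ((Equiv.Perm.sign τ : ℤ) : ℂ) *
          α (fun i => J (σ (Fin.castAdd p2 i))) (fun i => K (τ (Fin.castAdd q2 i))) x *
          β (fun i => J (σ (Fin.natAdd p1 i))) (fun i => K (τ (Fin.natAdd q1 i))) x

/-- The Hermitian form `ω = i g_{k̄j} dz^j ∧ dz̄^k` in components. -/
def omegaPQ {μ : ℕ} (g : Fin μ → Fin μ → (Fin μ → ℂ) → ℂ) : PQForm μ 1 1 :=
  fun J K x => Complex.I * g (K 0) (J 0) x

/-- Powers `ω^n` of the Hermitian form. -/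
def omegaPow {μ : ℕ} (g : Fin μ → Fin μ → (Fin μ → ℂ) → ℂ) : (n : ℕ) → PQForm μ n n
  | 0 => fun _ _ _ => 1
  | n + 1 => wedgePQ (omegaPow g n) (omegaPQ g)

/-- The operator `∂` on `(p,q)`-forms, in components. -/
def pdPQ {μ p q : ℕ} (α : PQForm μ p q) : PQForm μ (p + 1) q :=
  fun J K x =>
    ((p.factorial : ℕ) : ℂ)⁻¹ *
      ∑ σ : Equiv.Perm (Fin (p + 1)),
        ((Equiv.Perm.sign σ : ℤ) : ℂ) *
          Dh (J (σ 0)) (fun y => α (fun i => J (σ i.succ)) K y) x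

/-- The operator `∂̄` on `(p,q)`-forms, in components. -/
def pdbPQ {μ p q : ℕ} (α : PQForm μ p q) : PQForm μ p (q + 1) :=
  fun J K x =>
    ((q.factorial : ℕ) : ℂ)⁻¹ *
      ∑ σ : Equiv.Perm (Fin (q + 1)),
        ((Equiv.Perm.sign σ : ℤ) : ℂ) *
          Da (K (σ 0)) (fun y => α J (fun i => K (σ i.succ)) y) x


/-- Antiholomorphic covariant derivative `∇_{l̄} T_{k̄ j q}` of the torsion. -/
def nabBarTor {m : ℕ} (g gi : Fin m → Fin m → (Fin m → ℂ) → ℂ) (l k j q : Fin m) :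
    (Fin m → ℂ) → ℂ :=
  fun x => Da l (Tor g k j q) x - ∑ p : Fin m, AchrB g gi l k p x * Tor g p j q x

/-- Second covariant derivative `∇_d ∇_{l̄} T_{k̄ j q}` of the torsion. -/
def nabNabBarTor {m : ℕ} (g gi : Fin m → Fin m → (Fin m → ℂ) → ℂ) (d l k j q : Fin m) :
    (Fin m → ℂ) → ℂ :=
  fun x =>
    Dh d (nabBarTor g gi l k j q) x
      - ∑ r : Fin m, Achr g gi d j r x * nabBarTor g gi l k r q x
      - ∑ r : Fin m, Achr g gi d q r x * nabBarTor g gi l k j r x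

/-- Chern Laplacian `(ΔT)_{k̄ j q} = g^{λ μ̄} ∇_λ ∇_{μ̄} T_{k̄ j q}` of the torsion. -/
def lapTor {m : ℕ} (g gi : Fin m → Fin m → (Fin m → ℂ) → ℂ) (k j q : Fin m) :
    (Fin m → ℂ) → ℂ :=
  fun x => ∑ d : Fin m, ∑ l : Fin m, gi d l x * nabNabBarTor g gi d l k j q x

/-- Holomorphic covariant derivative `∇_d R̃_{k̄ j}` of the second Ricci curvature. -/
def nabRicSecond {m : ℕ} (g gi : Fin m → Fin m → (Fin m → ℂ) → ℂ) (d k j : Fin m) :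
    (Fin m → ℂ) → ℂ :=
  fun x => Dh d (RicSecond g gi k j) x - ∑ r : Fin m, Achr g gi d j r x * RicSecond g gi k r x


namespace Helpers
variable {m : ℕ} {f g : (Fin m → ℂ) → ℂ} {x : Fin m → ℂ}

def Sm {m : ℕ} (f : (Fin m → ℂ) → ℂ) : Prop := ContDiff ℝ (⊤ : ℕ∞) f

lemma Sm.fderiv_apply (hf : Sm f) (v : Fin m → ℂ) :
    Sm (fun z => fderiv ℝ f z v) := by
  have h1 : ContDiff ℝ (⊤ : ℕ∞) (fderiv ℝ f) := (contDiff_infty_iff_fderiv.1 hf).2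
  exact h1.clm_apply contDiff_const

lemma Sm.dh (hf : Sm f) (j : Fin m) : Sm (Dh j f) :=
  ((hf.fderiv_apply _).sub ((contDiff_const).mul (hf.fderiv_apply _))).div_const 2

lemma Sm.da (hf : Sm f) (j : Fin m) : Sm (Da j f) :=
  ((hf.fderiv_apply _).add ((contDiff_const).mul (hf.fderiv_apply _))).div_const 2

lemma Sm.mul (hf : Sm f) (hg : Sm g) : Sm (fun x => f x * g x) := ContDiff.mul hf hg
lemma Sm.add (hf : Sm f) (hg : Sm g) : Sm (fun x => f x + g x) := ContDiff.add hf hg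
lemma Sm.sub (hf : Sm f) (hg : Sm g) : Sm (fun x => f x - g x) := ContDiff.sub hf hg
lemma Sm.neg (hf : Sm f) : Sm (fun x => -(f x)) := ContDiff.neg hf
lemma Sm.sum {ι : Type*} (s : Finset ι) {f : ι → (Fin m → ℂ) → ℂ} (hf : ∀ i ∈ s, Sm (f i)) :
    Sm (fun x => ∑ i ∈ s, f i x) := ContDiff.sum hf
lemma Sm.diff (hf : Sm f) (x : Fin m → ℂ) : DifferentiableAt ℝ f x :=
  (hf.differentiable (by norm_num)).differentiableAt

lemma Dh_sub (hf : DifferentiableAt ℝ f x) (hg : DifferentiableAt ℝ g x)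
    (j : Fin m) : Dh j (fun y => f y - g y) x = Dh j f x - Dh j g x := by
  simp [Dh, fderiv_fun_sub hf hg]; ring

lemma Dh_neg (hf : DifferentiableAt ℝ f x) (j : Fin m) :
    Dh j (fun y => -(f y)) x = -(Dh j f x) := by
  simp [Dh, fderiv_neg]; ring

lemma Dh_mul (hf : DifferentiableAt ℝ f x) (hg : DifferentiableAt ℝ g x) (j : Fin m) :
    Dh j (fun y => f y * g y) x = f x * Dh j g x + g x * Dh j f x := by
  simp [Dh, fderiv_fun_mul hf hg]; ring

lemma Dh_sum {ι : Type*} (s : Finset ι) {f : ι → (Fin m → ℂ) → ℂ}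
    (hf : ∀ i ∈ s, DifferentiableAt ℝ (f i) x) (j : Fin m) :
    Dh j (fun y => ∑ i ∈ s, f i y) x = ∑ i ∈ s, Dh j (f i) x := by
  have h : fderiv ℝ (fun y => ∑ i ∈ s, f i y) x = ∑ i ∈ s, fderiv ℝ (f i) x := fderiv_fun_sum hf
  rw [Dh]
  simp only [h, ContinuousLinearMap.coe_sum', Finset.sum_apply, Finset.mul_sum]
  rw [← Finset.sum_sub_distrib, Finset.sum_div]
  rfl

lemma Dh_const (c : ℂ) (j : Fin m) (x : Fin m → ℂ) : Dh j (fun _ => c) x = 0 := by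
  simp [Dh]

lemma Da_sub (hf : DifferentiableAt ℝ f x) (hg : DifferentiableAt ℝ g x)
    (j : Fin m) : Da j (fun y => f y - g y) x = Da j f x - Da j g x := by
  simp [Da, fderiv_fun_sub hf hg]; ring

lemma Da_neg (hf : DifferentiableAt ℝ f x) (j : Fin m) :
    Da j (fun y => -(f y)) x = -(Da j f x) := by
  simp [Da, fderiv_neg]; ring

lemma Da_mul (hf : DifferentiableAt ℝ f x) (hg : DifferentiableAt ℝ g x) (j : Fin m) :
    Da j (fun y => f y * g y) x = f x * Da j g x + g x * Da j f x := by
  simp [Da, fderiv_fun_mul hf hg]; ring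

lemma Da_sum {ι : Type*} (s : Finset ι) {f : ι → (Fin m → ℂ) → ℂ}
    (hf : ∀ i ∈ s, DifferentiableAt ℝ (f i) x) (j : Fin m) :
    Da j (fun y => ∑ i ∈ s, f i y) x = ∑ i ∈ s, Da j (f i) x := by
  have h : fderiv ℝ (fun y => ∑ i ∈ s, f i y) x = ∑ i ∈ s, fderiv ℝ (f i) x := fderiv_fun_sum hf
  rw [Da]
  simp only [h, ContinuousLinearMap.coe_sum', Finset.sum_apply, Finset.mul_sum]
  rw [← Finset.sum_add_distrib, Finset.sum_div]
  rfl

lemma Da_const (c : ℂ) (j : Fin m) (x : Fin m → ℂ) : Da j (fun _ => c) x = 0 := by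
  simp [Da]

lemma D1_comm (hf : Sm f) (v w : Fin m → ℂ) (x : Fin m → ℂ) :
    fderiv ℝ (fun z => fderiv ℝ f z v) x w = fderiv ℝ (fun z => fderiv ℝ f z w) x v := by
  have hd : Differentiable ℝ (fderiv ℝ f) :=
    ((contDiff_infty_iff_fderiv.1 hf).2.differentiable (by norm_num))
  have h1 : ∀ u : Fin m → ℂ, ∀ y : Fin m → ℂ,
      fderiv ℝ (fun z => fderiv ℝ f z u) x y = fderiv ℝ (fderiv ℝ f) x y u := by
    intro u y
    rw [fderiv_clm_apply (hd x) (differentiableAt_const u)]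
    simp
  rw [h1, h1]
  have hsymm : IsSymmSndFDerivAt ℝ f x := by
    apply ContDiffAt.isSymmSndFDerivAt (n := (⊤ : ℕ∞)) hf.contDiffAt
    have : ((2:ℕ∞) : WithTop ℕ∞) ≤ ((⊤:ℕ∞) : WithTop ℕ∞) := WithTop.coe_le_coe.2 le_top
    simpa using this
  exact hsymm w v

lemma fderiv_Dh (hf : Sm f) (j : Fin m) (x v : Fin m → ℂ) :
    fderiv ℝ (Dh j f) x v =
      (fderiv ℝ (fun z => fderiv ℝ f z (Pi.single j 1)) x v
        - Complex.I * fderiv ℝ (fun z => fderiv ℝ f z (Pi.single j Complex.I)) x v) / 2 := by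
  have hA : DifferentiableAt ℝ (fun z => fderiv ℝ f z (Pi.single j 1)) x :=
    (hf.fderiv_apply _).diff x
  have hB : DifferentiableAt ℝ (fun z => fderiv ℝ f z (Pi.single j Complex.I)) x :=
    (hf.fderiv_apply _).diff x
  have h1 : Dh j f = fun z => ((2:ℂ))⁻¹ * (fderiv ℝ f z (Pi.single j 1)
      + (-Complex.I) * fderiv ℝ f z (Pi.single j Complex.I)) := by
    funext z; simp [Dh]; ring
  rw [h1, fderiv_const_mul (by exact hA.add (hB.const_mul _)),
    fderiv_fun_add hA (hB.const_mul _), fderiv_const_mul hB]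
  simp; ring

lemma fderiv_Da (hf : Sm f) (j : Fin m) (x v : Fin m → ℂ) :
    fderiv ℝ (Da j f) x v =
      (fderiv ℝ (fun z => fderiv ℝ f z (Pi.single j 1)) x v
        + Complex.I * fderiv ℝ (fun z => fderiv ℝ f z (Pi.single j Complex.I)) x v) / 2 := by
  have hA : DifferentiableAt ℝ (fun z => fderiv ℝ f z (Pi.single j 1)) x :=
    (hf.fderiv_apply _).diff x
  have hB : DifferentiableAt ℝ (fun z => fderiv ℝ f z (Pi.single j Complex.I)) x :=
    (hf.fderiv_apply _).diff x
  have h1 : Da j f = fun z => ((2:ℂ))⁻¹ * (fderiv ℝ f z (Pi.single j 1)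
      + Complex.I * fderiv ℝ f z (Pi.single j Complex.I)) := by
    funext z; simp [Da]; ring
  rw [h1, fderiv_const_mul (by exact hA.add (hB.const_mul _)),
    fderiv_fun_add hA (hB.const_mul _), fderiv_const_mul hB]
  simp; ring

lemma Dh_Da_comm (hf : Sm f) (d l : Fin m) (x : Fin m → ℂ) :
    Dh d (Da l f) x = Da l (Dh d f) x := by
  simp only [Dh, Da, fderiv_Dh hf, fderiv_Da hf]
  rw [D1_comm hf (Pi.single l 1) (Pi.single d 1) x,
    D1_comm hf (Pi.single l Complex.I) (Pi.single d 1) x,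
    D1_comm hf (Pi.single l 1) (Pi.single d Complex.I) x,
    D1_comm hf (Pi.single l Complex.I) (Pi.single d Complex.I) x]
  ring

lemma Dh_Dh_comm (hf : Sm f) (d l : Fin m) (x : Fin m → ℂ) :
    Dh d (Dh l f) x = Dh l (Dh d f) x := by
  simp only [Dh, fderiv_Dh hf]
  rw [D1_comm hf (Pi.single l 1) (Pi.single d 1) x,
    D1_comm hf (Pi.single l Complex.I) (Pi.single d 1) x,
    D1_comm hf (Pi.single l 1) (Pi.single d Complex.I) x,
    D1_comm hf (Pi.single l Complex.I) (Pi.single d Complex.I) x]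
  ring

end Helpers

namespace Geom
open Helpers

variable {m : ℕ} (g gi : Fin m → Fin m → (Fin m → ℂ) → ℂ)

section Main
variable (hg : ∀ k j, Sm (g k j)) (hgi : ∀ k j, Sm (gi k j))
  (hinv1 : ∀ x j q, ∑ k : Fin m, gi j k x * g k q x = if j = q then 1 else 0)
  (hinv2 : ∀ x k j, ∑ q : Fin m, g k q x * gi q j x = if k = j then 1 else 0)

include hg hgi in
lemma sm_Achr (d q p : Fin m) : Sm (Achr g gi d q p) :=
  Sm.sum _ (fun s _ => (hgi p s).mul ((hg s q).dh d))

include hg hgi in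
lemma sm_AchrB (d k p : Fin m) : Sm (AchrB g gi d k p) :=
  Sm.sum _ (fun s _ => (hgi s p).mul ((hg k s).da d))

include hg in
lemma sm_Tor (k j n : Fin m) : Sm (Tor g k j n) :=
  ((hg k n).dh j).sub ((hg k j).dh n)

include hg hgi in
lemma sm_Rmix (k j p q : Fin m) : Sm (Rmix g gi k j p q) :=
  ((sm_Achr g gi hg hgi j q p).da k).neg

include hg hgi in
lemma sm_Rlow (k j l n : Fin m) : Sm (Rlow g gi k j l n) :=
  (((hg l n).dh j).da k).neg.add
    (Sm.sum _ fun s _ => Sm.sum _ fun r _ =>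
      ((hgi s r).mul ((hg l s).da k)).mul ((hg r n).dh j))

include hg hgi in
lemma sm_RicSecond (k j : Fin m) : Sm (RicSecond g gi k j) :=
  Sm.sum _ fun p _ => Sm.sum _ fun q _ => (hgi p q).mul (sm_Rlow g gi hg hgi q p k j)

include hg hgi in
lemma sm_nabBarTor (l k j q : Fin m) : Sm (nabBarTor g gi l k j q) :=
  ((sm_Tor g hg k j q).da l).sub
    (Sm.sum _ fun p _ => (sm_AchrB g gi hg hgi l k p).mul (sm_Tor g hg p j q))

end Main
end Geom

namespace Geom
open Helpers

section Main2
variable {m : ℕ} (g gi : Fin m → Fin m → (Fin m → ℂ) → ℂ)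
variable (hg : ∀ k j, Sm (g k j)) (hgi : ∀ k j, Sm (gi k j))
  (hinv1 : ∀ x j q, ∑ k : Fin m, gi j k x * g k q x = if j = q then 1 else 0)
  (hinv2 : ∀ x k j, ∑ q : Fin m, g k q x * gi q j x = if k = j then 1 else 0)

include hg hgi hinv1 in
/-- Differentiating `gi · g = 1` in the holomorphic direction. -/
lemma dgi_h_step (d p q : Fin m) (x : Fin m → ℂ) :
    ∑ k : Fin m, g k q x * Dh d (gi p k) x = -(Achr g gi d q p x) := by
  have hconst : (fun y => ∑ k : Fin m, gi p k y * g k q y)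
      = (fun _ => if p = q then (1:ℂ) else 0) := funext fun y => hinv1 y p q
  have h0 : (0:ℂ) = ∑ k : Fin m, Dh d (fun y => gi p k y * g k q y) x := by
    rw [← Dh_sum Finset.univ (fun i _ => ((hgi p i).mul (hg i q)).diff x) d, hconst, Dh_const]
  have h1 : (0:ℂ) = ∑ k : Fin m,
      (gi p k x * Dh d (g k q) x + g k q x * Dh d (gi p k) x) := by
    rw [h0]
    exact Finset.sum_congr rfl fun k _ => Dh_mul ((hgi p k).diff x) ((hg k q).diff x) d
  rw [Finset.sum_add_distrib] at h1
  have : Achr g gi d q p x = ∑ k : Fin m, gi p k x * Dh d (g k q) x := rfl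
  linear_combination -h1 + this

include hg hgi hinv1 hinv2 in
/-- `∂_d g^{p t̄} = - A^p_{d q} g^{q t̄}`. -/
lemma dgi_h (d p t : Fin m) (x : Fin m → ℂ) :
    Dh d (gi p t) x = -∑ q : Fin m, Achr g gi d q p x * gi q t x := by
  have h2 : Dh d (gi p t) x
      = ∑ q : Fin m, gi q t x * (∑ k : Fin m, g k q x * Dh d (gi p k) x) := by
    have : ∑ q : Fin m, gi q t x * (∑ k : Fin m, g k q x * Dh d (gi p k) x)
        = ∑ k : Fin m, (∑ q : Fin m, g k q x * gi q t x) * Dh d (gi p k) x := by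
      simp only [Finset.mul_sum, Finset.sum_mul]
      rw [Finset.sum_comm]
      exact Finset.sum_congr rfl fun k _ => Finset.sum_congr rfl fun q _ => by ring
    rw [this]
    simp [hinv2 x, ite_mul]
  rw [h2]
  simp only [dgi_h_step g gi hg hgi hinv1 d p _ x]
  rw [← Finset.sum_neg_distrib]
  exact Finset.sum_congr rfl fun q _ => by ring

include hg hgi hinv2 in
/-- Differentiating `g · gi = 1` in the antiholomorphic direction (contracted form). -/
lemma g_dgi_a (l k t : Fin m) (x : Fin m → ℂ) :
    ∑ s : Fin m, g k s x * Da l (gi s t) x = -∑ s : Fin m, Da l (g k s) x * gi s t x := by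
  have hconst : (fun y => ∑ s : Fin m, g k s y * gi s t y)
      = (fun _ => if k = t then (1:ℂ) else 0) := funext fun y => hinv2 y k t
  have h0 : (0:ℂ) = ∑ s : Fin m, Da l (fun y => g k s y * gi s t y) x := by
    rw [← Da_sum Finset.univ (fun i _ => ((hg k i).mul (hgi i t)).diff x) l, hconst, Da_const]
  have h1 : (0:ℂ) = ∑ s : Fin m,
      (g k s x * Da l (gi s t) x + gi s t x * Da l (g k s) x) := by
    rw [h0]
    exact Finset.sum_congr rfl fun s _ => Da_mul ((hg k s).diff x) ((hgi s t).diff x) l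
  rw [Finset.sum_add_distrib] at h1
  have h2 : ∑ s : Fin m, gi s t x * Da l (g k s) x = ∑ s : Fin m, Da l (g k s) x * gi s t x :=
    Finset.sum_congr rfl fun s _ => by ring
  linear_combination -h1 - h2

end Main2
end Geom

namespace Geom
open Helpers

section Main3
variable {m : ℕ} (g gi : Fin m → Fin m → (Fin m → ℂ) → ℂ)
variable (hg : ∀ k j, Sm (g k j)) (hgi : ∀ k j, Sm (gi k j))
  (hinv1 : ∀ x j q, ∑ k : Fin m, gi j k x * g k q x = if j = q then 1 else 0)
  (hinv2 : ∀ x k j, ∑ q : Fin m, g k q x * gi q j x = if k = j then 1 else 0)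

lemma rmix_eq (k j p q : Fin m) (x : Fin m → ℂ) :
    Rmix g gi k j p q x = -(Da k (Achr g gi j q p) x) := rfl

lemma da_Achr (k j p q : Fin m) (x : Fin m → ℂ) :
    Da k (Achr g gi j q p) x = -(Rmix g gi k j p q x) := by
  rw [rmix_eq]; ring

include hg hgi hinv2 in
/-- `R_{l̄ a k̄ b} = g_{k̄ s} R_{l̄ a}{}^s{}_b`. -/
lemma rlow_eq (l a k b : Fin m) (x : Fin m → ℂ) :
    Rlow g gi l a k b x = ∑ s : Fin m, g k s x * Rmix g gi l a s b x := by
  have hda : ∀ s : Fin m, Da l (Achr g gi a b s) x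
      = ∑ t : Fin m, (gi s t x * Da l (Dh a (g t b)) x
          + Dh a (g t b) x * Da l (gi s t) x) := by
    intro s
    have h1 : Da l (Achr g gi a b s) x
        = ∑ t : Fin m, Da l (fun y => gi s t y * Dh a (g t b) y) x :=
      Da_sum Finset.univ (fun t _ => ((hgi s t).mul ((hg t b).dh a)).diff x) l
    rw [h1]
    exact Finset.sum_congr rfl fun t _ =>
      Da_mul ((hgi s t).diff x) (((hg t b).dh a).diff x) l
  have c1 : ∑ s : Fin m, ∑ t : Fin m, g k s x * gi s t x * Da l (Dh a (g t b)) x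
      = Da l (Dh a (g k b)) x := by
    rw [Finset.sum_comm]
    calc ∑ t : Fin m, ∑ s : Fin m, g k s x * gi s t x * Da l (Dh a (g t b)) x
        = ∑ t : Fin m, (if k = t then 1 else 0) * Da l (Dh a (g t b)) x := by
          refine Finset.sum_congr rfl fun t _ => ?_
          rw [← Finset.sum_mul, hinv2 x k t]
      _ = Da l (Dh a (g k b)) x := by simp
  have c2 : ∑ s : Fin m, ∑ t : Fin m, g k s x * Dh a (g t b) x * Da l (gi s t) x
      = -∑ s : Fin m, ∑ r : Fin m, gi s r x * Da l (g k s) x * Dh a (g r b) x := by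
    rw [Finset.sum_comm]
    calc ∑ t : Fin m, ∑ s : Fin m, g k s x * Dh a (g t b) x * Da l (gi s t) x
        = ∑ t : Fin m, Dh a (g t b) x * ∑ s : Fin m, g k s x * Da l (gi s t) x := by
          refine Finset.sum_congr rfl fun t _ => ?_
          rw [Finset.mul_sum]
          exact Finset.sum_congr rfl fun s _ => by ring
      _ = ∑ t : Fin m, Dh a (g t b) x * -∑ s : Fin m, Da l (g k s) x * gi s t x :=
          Finset.sum_congr rfl fun t _ => by rw [g_dgi_a g gi hg hgi hinv2 l k t x]
      _ = ∑ t : Fin m, ∑ s : Fin m, -(gi s t x * Da l (g k s) x * Dh a (g t b) x) := by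
          refine Finset.sum_congr rfl fun t _ => ?_
          rw [mul_neg, Finset.mul_sum, ← Finset.sum_neg_distrib]
          exact Finset.sum_congr rfl fun s _ => by ring
      _ = -∑ s : Fin m, ∑ r : Fin m, gi s r x * Da l (g k s) x * Dh a (g r b) x := by
          rw [Finset.sum_comm]
          simp only [Finset.sum_neg_distrib]
  have h3 : ∑ s : Fin m, g k s x * Rmix g gi l a s b x
      = ∑ s : Fin m, ∑ t : Fin m,
          (-(g k s x * gi s t x * Da l (Dh a (g t b)) x)
            - g k s x * Dh a (g t b) x * Da l (gi s t) x) := by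
    refine Finset.sum_congr rfl fun s _ => ?_
    rw [rmix_eq, hda s, mul_neg, Finset.mul_sum, ← Finset.sum_neg_distrib]
    exact Finset.sum_congr rfl fun t _ => by ring
  rw [show Rlow g gi l a k b x = -(Da l (Dh a (g k b)) x)
      + ∑ s : Fin m, ∑ r : Fin m, gi s r x * Da l (g k s) x * Dh a (g r b) x from rfl, h3]
  simp only [Finset.sum_sub_distrib, Finset.sum_neg_distrib]
  rw [c1, c2]
  ring

include hg hgi hinv1 hinv2 in
/-- Antisymmetrized derivative of the connection: `∂_d A^p_{qj} - ∂_q A^p_{dj}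
    = A^p_{qr} A^r_{dj} - A^p_{dr} A^r_{qj}`. -/
lemma dh_Achr_antisym (d q j p : Fin m) (x : Fin m → ℂ) :
    Dh d (Achr g gi q j p) x - Dh q (Achr g gi d j p) x
      = ∑ r : Fin m, (Achr g gi q r p x * Achr g gi d j r x
          - Achr g gi d r p x * Achr g gi q j r x) := by
  have key : ∀ d' q' : Fin m, Dh d' (Achr g gi q' j p) x
      = (∑ s : Fin m, gi p s x * Dh d' (Dh q' (g s j)) x)
        - ∑ r : Fin m, Achr g gi d' r p x * Achr g gi q' j r x := by
    intro d' q'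
    have h1 : Dh d' (Achr g gi q' j p) x
        = ∑ s : Fin m, Dh d' (fun y => gi p s y * Dh q' (g s j) y) x :=
      Dh_sum Finset.univ (fun s _ => ((hgi p s).mul ((hg s j).dh q')).diff x) d'
    have h2 : ∀ s : Fin m, Dh d' (fun y => gi p s y * Dh q' (g s j) y) x
        = gi p s x * Dh d' (Dh q' (g s j)) x + Dh q' (g s j) x * Dh d' (gi p s) x :=
      fun s => Dh_mul ((hgi p s).diff x) (((hg s j).dh q').diff x) d'
    have h5 : ∀ s : Fin m, Dh q' (g s j) x * Dh d' (gi p s) x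
        = ∑ r : Fin m, -(Achr g gi d' r p x * (gi r s x * Dh q' (g s j) x)) := by
      intro s
      rw [dgi_h g gi hg hgi hinv1 hinv2 d' p s x, mul_neg, Finset.mul_sum,
        ← Finset.sum_neg_distrib]
      exact Finset.sum_congr rfl fun r _ => by ring
    have h6 : ∀ r : Fin m,
        ∑ s : Fin m, -(Achr g gi d' r p x * (gi r s x * Dh q' (g s j) x))
          = -(Achr g gi d' r p x * Achr g gi q' j r x) := by
      intro r
      have ha : Achr g gi q' j r x = ∑ s : Fin m, gi r s x * Dh q' (g s j) x := rfl
      rw [Finset.sum_neg_distrib, ← Finset.mul_sum, ha]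
    rw [h1]
    simp only [h2, h5]
    rw [Finset.sum_add_distrib, Finset.sum_comm]
    simp only [h6]
    rw [Finset.sum_neg_distrib]
    ring
  rw [key d q, key q d]
  have hsym : ∑ s : Fin m, gi p s x * Dh d (Dh q (g s j)) x
      = ∑ s : Fin m, gi p s x * Dh q (Dh d (g s j)) x :=
    Finset.sum_congr rfl fun s _ => by rw [Dh_Dh_comm (hg s j) d q x]
  rw [hsym, Finset.sum_sub_distrib]
  ring

end Main3
end Geom

namespace Geom
open Helpers

/-- Full holomorphic covariant derivative `∇_d R_{l̄ a k̄ b}` of the lowered curvature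
(no correction on the barred indices for the Chern connection). -/
def nabRlow {m : ℕ} (g gi : Fin m → Fin m → (Fin m → ℂ) → ℂ) (d l a k b : Fin m) :
    (Fin m → ℂ) → ℂ :=
  fun x =>
    Dh d (Rlow g gi l a k b) x
      - (∑ r : Fin m, Achr g gi d a r x * Rlow g gi l r k b x)
      - ∑ r : Fin m, Achr g gi d b r x * Rlow g gi l a k r x

section Main4
variable {m : ℕ} (g gi : Fin m → Fin m → (Fin m → ℂ) → ℂ)
variable (hg : ∀ k j, Sm (g k j)) (hgi : ∀ k j, Sm (gi k j))
  (hinv1 : ∀ x j q, ∑ k : Fin m, gi j k x * g k q x = if j = q then 1 else 0)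
  (hinv2 : ∀ x k j, ∑ q : Fin m, g k q x * gi q j x = if k = j then 1 else 0)

include hg in
/-- First Bianchi identity `∇_{l̄} T_{k̄ j q} = R_{l̄ q k̄ j} - R_{l̄ j k̄ q}`. -/
lemma bianchi1 (l k j q : Fin m) (x : Fin m → ℂ) :
    nabBarTor g gi l k j q x = Rlow g gi l q k j x - Rlow g gi l j k q x := by
  have e1 : Da l (Tor g k j q) x = Da l (Dh j (g k q)) x - Da l (Dh q (g k j)) x := by
    rw [show Tor g k j q = (fun y => Dh j (g k q) y - Dh q (g k j) y) from rfl]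
    exact Da_sub (((hg k q).dh j).diff x) (((hg k j).dh q).diff x) l
  have e2 : ∑ p : Fin m, AchrB g gi l k p x * Tor g p j q x
      = ∑ p : Fin m, ∑ s : Fin m,
          gi s p x * Da l (g k s) x * (Dh j (g p q) x - Dh q (g p j) x) := by
    refine Finset.sum_congr rfl fun p _ => ?_
    rw [show AchrB g gi l k p x = ∑ s : Fin m, gi s p x * Da l (g k s) x from rfl,
      Finset.sum_mul]
    exact Finset.sum_congr rfl fun s _ => rfl
  have e3 : ∑ p : Fin m, ∑ s : Fin m,
        gi s p x * Da l (g k s) x * (Dh j (g p q) x - Dh q (g p j) x)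
      = (∑ s : Fin m, ∑ r : Fin m, gi s r x * Da l (g k s) x * Dh j (g r q) x)
        - ∑ s : Fin m, ∑ r : Fin m, gi s r x * Da l (g k s) x * Dh q (g r j) x := by
    rw [Finset.sum_comm, ← Finset.sum_sub_distrib]
    refine Finset.sum_congr rfl fun s _ => ?_
    rw [← Finset.sum_sub_distrib]
    exact Finset.sum_congr rfl fun p _ => by ring
  have e4 : nabBarTor g gi l k j q x
      = Da l (Tor g k j q) x - ∑ p : Fin m, AchrB g gi l k p x * Tor g p j q x := rfl
  have e5 : Rlow g gi l q k j x = -(Da l (Dh q (g k j)) x)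
      + ∑ s : Fin m, ∑ r : Fin m, gi s r x * Da l (g k s) x * Dh q (g r j) x := rfl
  have e6 : Rlow g gi l j k q x = -(Da l (Dh j (g k q)) x)
      + ∑ s : Fin m, ∑ r : Fin m, gi s r x * Da l (g k s) x * Dh j (g r q) x := rfl
  rw [e4, e2, e3, e1, e5, e6]
  ring

include hg hgi in
/-- `∇_d ∇_{l̄} T_{k̄ j q} = ∇_d R_{l̄ q k̄ j} - ∇_d R_{l̄ j k̄ q}`. -/
lemma nabnab_eq (d l k j q : Fin m) (x : Fin m → ℂ) :
    nabNabBarTor g gi d l k j q x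
      = nabRlow g gi d l q k j x - nabRlow g gi d l j k q x := by
  have hb : ∀ j' q', nabBarTor g gi l k j' q'
      = fun y => Rlow g gi l q' k j' y - Rlow g gi l j' k q' y :=
    fun j' q' => funext fun y => bianchi1 g gi hg l k j' q' y
  have hb' : ∀ j' q' (y : Fin m → ℂ), nabBarTor g gi l k j' q' y
      = Rlow g gi l q' k j' y - Rlow g gi l j' k q' y :=
    fun j' q' y => bianchi1 g gi hg l k j' q' y
  have e0 : nabNabBarTor g gi d l k j q x
      = Dh d (nabBarTor g gi l k j q) x
        - ∑ r : Fin m, Achr g gi d j r x * nabBarTor g gi l k r q x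
        - ∑ r : Fin m, Achr g gi d q r x * nabBarTor g gi l k j r x := rfl
  rw [e0, hb j q]
  rw [Dh_sub ((sm_Rlow g gi hg hgi l q k j).diff x) ((sm_Rlow g gi hg hgi l j k q).diff x) d]
  simp only [hb']
  rw [show nabRlow g gi d l q k j x = Dh d (Rlow g gi l q k j) x
      - (∑ r : Fin m, Achr g gi d q r x * Rlow g gi l r k j x)
      - ∑ r : Fin m, Achr g gi d j r x * Rlow g gi l q k r x from rfl,
    show nabRlow g gi d l j k q x = Dh d (Rlow g gi l j k q) x
      - (∑ r : Fin m, Achr g gi d j r x * Rlow g gi l r k q x)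
      - ∑ r : Fin m, Achr g gi d q r x * Rlow g gi l j k r x from rfl]
  simp only [mul_sub, Finset.sum_sub_distrib]
  ring

include hg hgi hinv2 in
/-- Contraction `g_{k̄ s} A^s_{a r} = ∂_a g_{k̄ r}`. -/
lemma g_Achr_contract (k a r : Fin m) (x : Fin m → ℂ) :
    ∑ s : Fin m, g k s x * Achr g gi a r s x = Dh a (g k r) x := by
  have h1 : ∑ s : Fin m, g k s x * Achr g gi a r s x
      = ∑ s : Fin m, ∑ t : Fin m, g k s x * gi s t x * Dh a (g t r) x := by
    refine Finset.sum_congr rfl fun s _ => ?_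
    rw [show Achr g gi a r s x = ∑ t : Fin m, gi s t x * Dh a (g t r) x from rfl,
      Finset.mul_sum]
    exact Finset.sum_congr rfl fun t _ => by ring
  rw [h1, Finset.sum_comm]
  calc ∑ t : Fin m, ∑ s : Fin m, g k s x * gi s t x * Dh a (g t r) x
      = ∑ t : Fin m, (if k = t then 1 else 0) * Dh a (g t r) x := by
        refine Finset.sum_congr rfl fun t _ => ?_
        rw [← Finset.sum_mul, hinv2 x k t]
    _ = Dh a (g k r) x := by simp

end Main4
end Geom

namespace Geom
open Helpers

section Main5
variable {m : ℕ} (g gi : Fin m → Fin m → (Fin m → ℂ) → ℂ)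
variable (hg : ∀ k j, Sm (g k j)) (hgi : ∀ k j, Sm (gi k j))
  (hinv1 : ∀ x j q, ∑ k : Fin m, gi j k x * g k q x = if j = q then 1 else 0)
  (hinv2 : ∀ x k j, ∑ q : Fin m, g k q x * gi q j x = if k = j then 1 else 0)

include hg hgi hinv1 hinv2 in
/-- Second Bianchi identity
`∇_d R_{l̄ q k̄ j} - ∇_q R_{l̄ d k̄ j} = (A^r_{qd} - A^r_{dq}) R_{l̄ r k̄ j}`. -/
lemma bianchi2 (d q l k j : Fin m) (x : Fin m → ℂ) :
    nabRlow g gi d l q k j x - nabRlow g gi q l d k j x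
      = ∑ r : Fin m, (Achr g gi q d r x - Achr g gi d q r x) * Rlow g gi l r k j x := by
  have sA : ∀ a b s : Fin m, Sm (Achr g gi a b s) := fun a b s => sm_Achr g gi hg hgi a b s
  have hRmixDh : ∀ (d' q' s : Fin m),
      Dh d' (Rmix g gi l q' s j) x = -(Da l (Dh d' (Achr g gi q' j s)) x) := by
    intro d' q' s
    rw [show Rmix g gi l q' s j = (fun y => -(Da l (Achr g gi q' j s) y)) from rfl,
      Dh_neg (((sA q' j s).da l).diff x) d', Dh_Da_comm (sA q' j s) d' l x]
  have hDhRlow : ∀ d' q' : Fin m, Dh d' (Rlow g gi l q' k j) x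
      = ∑ s : Fin m, (g k s x * Dh d' (Rmix g gi l q' s j) x
          + Rmix g gi l q' s j x * Dh d' (g k s) x) := by
    intro d' q'
    rw [show Rlow g gi l q' k j = (fun y => ∑ s : Fin m, g k s y * Rmix g gi l q' s j y)
        from funext fun y => rlow_eq g gi hg hgi hinv2 l q' k j y,
      Dh_sum Finset.univ
        (fun s _ => ((hg k s).mul (sm_Rmix g gi hg hgi l q' s j)).diff x) d']
    exact Finset.sum_congr rfl fun s _ =>
      Dh_mul ((hg k s).diff x) ((sm_Rmix g gi hg hgi l q' s j).diff x) d'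
  have cross : ∀ s : Fin m,
      Da l (Dh d (Achr g gi q j s)) x - Da l (Dh q (Achr g gi d j s)) x
        = ∑ r : Fin m,
            (-(Achr g gi q r s x * Rmix g gi l d r j x)
              - Achr g gi d j r x * Rmix g gi l q s r x
              + Achr g gi d r s x * Rmix g gi l q r j x
              + Achr g gi q j r x * Rmix g gi l d s r x) := by
    intro s
    rw [← Da_sub (((sA q j s).dh d).diff x) (((sA d j s).dh q).diff x) l,
      show (fun y => Dh d (Achr g gi q j s) y - Dh q (Achr g gi d j s) y)
        = (fun y => ∑ r : Fin m, (Achr g gi q r s y * Achr g gi d j r y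
            - Achr g gi d r s y * Achr g gi q j r y))
        from funext fun y => dh_Achr_antisym g gi hg hgi hinv1 hinv2 d q j s y,
      Da_sum Finset.univ (fun r _ =>
        (((sA q r s).mul (sA d j r)).sub ((sA d r s).mul (sA q j r))).diff x) l]
    refine Finset.sum_congr rfl fun r _ => ?_
    rw [Da_sub (((sA q r s).mul (sA d j r)).diff x) (((sA d r s).mul (sA q j r)).diff x) l,
      Da_mul ((sA q r s).diff x) ((sA d j r).diff x) l,
      Da_mul ((sA d r s).diff x) ((sA q j r).diff x) l]
    simp only [da_Achr g gi]
    ring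
  -- the four triple-sum terms
  set T1 := ∑ s : Fin m, ∑ r : Fin m,
      g k s x * Achr g gi q r s x * Rmix g gi l d r j x with hT1
  set T2 := ∑ s : Fin m, ∑ r : Fin m,
      g k s x * Achr g gi d j r x * Rmix g gi l q s r x with hT2
  set T3 := ∑ s : Fin m, ∑ r : Fin m,
      g k s x * Achr g gi d r s x * Rmix g gi l q r j x with hT3
  set T4 := ∑ s : Fin m, ∑ r : Fin m,
      g k s x * Achr g gi q j r x * Rmix g gi l d s r x with hT4
  have main : Dh d (Rlow g gi l q k j) x - Dh q (Rlow g gi l d k j) x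
      = (∑ s : Fin m, Rmix g gi l q s j x * Dh d (g k s) x)
        - (∑ s : Fin m, Rmix g gi l d s j x * Dh q (g k s) x)
        + T1 + T2 - T3 - T4 := by
    have step1 : Dh d (Rlow g gi l q k j) x - Dh q (Rlow g gi l d k j) x
        = ∑ s : Fin m,
            (Rmix g gi l q s j x * Dh d (g k s) x
              - Rmix g gi l d s j x * Dh q (g k s) x
              - g k s x * (∑ r : Fin m,
                (-(Achr g gi q r s x * Rmix g gi l d r j x)
                  - Achr g gi d j r x * Rmix g gi l q s r x
                  + Achr g gi d r s x * Rmix g gi l q r j x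
                  + Achr g gi q j r x * Rmix g gi l d s r x))) := by
      rw [hDhRlow d q, hDhRlow q d, ← Finset.sum_sub_distrib]
      refine Finset.sum_congr rfl fun s _ => ?_
      rw [hRmixDh d q s, hRmixDh q d s]
      linear_combination (-(g k s x)) * cross s
    rw [step1]
    have step2 : ∀ s : Fin m, g k s x * (∑ r : Fin m,
          (-(Achr g gi q r s x * Rmix g gi l d r j x)
            - Achr g gi d j r x * Rmix g gi l q s r x
            + Achr g gi d r s x * Rmix g gi l q r j x
            + Achr g gi q j r x * Rmix g gi l d s r x))
        = ∑ r : Fin m,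
            (-(g k s x * Achr g gi q r s x * Rmix g gi l d r j x)
              + -(g k s x * Achr g gi d j r x * Rmix g gi l q s r x)
              + g k s x * Achr g gi d r s x * Rmix g gi l q r j x
              + g k s x * Achr g gi q j r x * Rmix g gi l d s r x) := by
      intro s
      rw [Finset.mul_sum]
      exact Finset.sum_congr rfl fun r _ => by ring
    simp only [step2]
    simp only [Finset.sum_add_distrib, Finset.sum_neg_distrib, Finset.sum_sub_distrib]
    ring
  -- contractions of the triple sums
  have cT1 : T1 = ∑ r : Fin m, Dh q (g k r) x * Rmix g gi l d r j x := by
    rw [hT1, Finset.sum_comm]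
    refine Finset.sum_congr rfl fun r _ => ?_
    rw [← Finset.sum_mul, g_Achr_contract g gi hg hgi hinv2 k q r x]
  have cT3 : T3 = ∑ r : Fin m, Dh d (g k r) x * Rmix g gi l q r j x := by
    rw [hT3, Finset.sum_comm]
    refine Finset.sum_congr rfl fun r _ => ?_
    rw [← Finset.sum_mul, g_Achr_contract g gi hg hgi hinv2 k d r x]
  have cT2 : T2 = ∑ r : Fin m, Achr g gi d j r x * Rlow g gi l q k r x := by
    rw [hT2, Finset.sum_comm]
    refine Finset.sum_congr rfl fun r _ => ?_
    rw [rlow_eq g gi hg hgi hinv2 l q k r x, Finset.mul_sum]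
    exact Finset.sum_congr rfl fun s _ => by ring
  have cT4 : T4 = ∑ r : Fin m, Achr g gi q j r x * Rlow g gi l d k r x := by
    rw [hT4, Finset.sum_comm]
    refine Finset.sum_congr rfl fun r _ => ?_
    rw [rlow_eq g gi hg hgi hinv2 l d k r x, Finset.mul_sum]
    exact Finset.sum_congr rfl fun s _ => by ring
  have hS1 : ∑ s : Fin m, Rmix g gi l d s j x * Dh q (g k s) x
      = ∑ r : Fin m, Dh q (g k r) x * Rmix g gi l d r j x :=
    Finset.sum_congr rfl fun s _ => by ring
  have hS2 : ∑ s : Fin m, Rmix g gi l q s j x * Dh d (g k s) x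
      = ∑ r : Fin m, Dh d (g k r) x * Rmix g gi l q r j x :=
    Finset.sum_congr rfl fun s _ => by ring
  have hsub : ∑ r : Fin m, (Achr g gi q d r x - Achr g gi d q r x) * Rlow g gi l r k j x
      = (∑ r : Fin m, Achr g gi q d r x * Rlow g gi l r k j x)
        - ∑ r : Fin m, Achr g gi d q r x * Rlow g gi l r k j x := by
    rw [← Finset.sum_sub_distrib]
    exact Finset.sum_congr rfl fun r _ => by ring
  rw [show nabRlow g gi d l q k j x = Dh d (Rlow g gi l q k j) x
      - (∑ r : Fin m, Achr g gi d q r x * Rlow g gi l r k j x)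
      - ∑ r : Fin m, Achr g gi d j r x * Rlow g gi l q k r x from rfl,
    show nabRlow g gi q l d k j x = Dh q (Rlow g gi l d k j) x
      - (∑ r : Fin m, Achr g gi q d r x * Rlow g gi l r k j x)
      - ∑ r : Fin m, Achr g gi q j r x * Rlow g gi l d k r x from rfl,
    hsub]
  linear_combination main + cT1 - cT3 + cT2 - cT4 - hS1 + hS2

end Main5
end Geom

namespace Geom
open Helpers

section Main6
variable {m : ℕ} (g gi : Fin m → Fin m → (Fin m → ℂ) → ℂ)
variable (hg : ∀ k j, Sm (g k j)) (hgi : ∀ k j, Sm (gi k j))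
  (hinv1 : ∀ x j q, ∑ k : Fin m, gi j k x * g k q x = if j = q then 1 else 0)
  (hinv2 : ∀ x k j, ∑ q : Fin m, g k q x * gi q j x = if k = j then 1 else 0)

lemma sum3_rot {F : Fin m → Fin m → Fin m → ℂ} :
    (∑ a : Fin m, ∑ b : Fin m, ∑ c : Fin m, F a b c)
      = ∑ c : Fin m, ∑ a : Fin m, ∑ b : Fin m, F a b c := by
  have h1 : ∀ a : Fin m, (∑ b : Fin m, ∑ c : Fin m, F a b c)
      = ∑ c : Fin m, ∑ b : Fin m, F a b c := fun a => Finset.sum_comm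
  simp only [h1]
  exact Finset.sum_comm

include hg hgi hinv1 hinv2 in
/-- Tracing the covariant derivative of the curvature gives the covariant
derivative of the second Ricci curvature. -/
lemma trace_nabRlow (a k j : Fin m) (x : Fin m → ℂ) :
    ∑ d : Fin m, ∑ l : Fin m, gi d l x * nabRlow g gi a l d k j x
      = nabRicSecond g gi a k j x := by
  -- canonical triple sums
  set W := ∑ d : Fin m, ∑ l : Fin m, gi d l x * Dh a (Rlow g gi l d k j) x with hW
  set Q1 := ∑ d : Fin m, ∑ l : Fin m, ∑ r : Fin m,
      gi d l x * Achr g gi a d r x * Rlow g gi l r k j x with hQ1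
  set Q2 := ∑ d : Fin m, ∑ l : Fin m, ∑ r : Fin m,
      gi d l x * Achr g gi a j r x * Rlow g gi l d k r x with hQ2
  set P1 := ∑ p : Fin m, ∑ t : Fin m, ∑ r : Fin m,
      Achr g gi a r p x * gi r t x * Rlow g gi t p k j x with hP1
  -- LHS = W - Q1 - Q2
  have hLHS : ∑ d : Fin m, ∑ l : Fin m, gi d l x * nabRlow g gi a l d k j x
      = W - Q1 - Q2 := by
    rw [hW, hQ1, hQ2]
    simp only [← Finset.sum_sub_distrib]
    refine Finset.sum_congr rfl fun d _ => Finset.sum_congr rfl fun l _ => ?_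
    rw [show nabRlow g gi a l d k j x = Dh a (Rlow g gi l d k j) x
        - (∑ r : Fin m, Achr g gi a d r x * Rlow g gi l r k j x)
        - ∑ r : Fin m, Achr g gi a j r x * Rlow g gi l d k r x from rfl]
    rw [mul_sub, mul_sub, Finset.mul_sum, Finset.mul_sum]
    congr 1
    · congr 1
      exact Finset.sum_congr rfl fun r _ => by ring
    · exact Finset.sum_congr rfl fun r _ => by ring
  rw [hLHS]
  -- RHS = W - P1 - (∑ r, Achr a j r * RicSecond k r)
  have hDhRic : Dh a (RicSecond g gi k j) x
      = W - P1 := by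
    have h1 : Dh a (RicSecond g gi k j) x
        = ∑ p : Fin m, Dh a (fun y => ∑ t : Fin m, gi p t y * Rlow g gi t p k j y) x := by
      rw [show RicSecond g gi k j
          = (fun y => ∑ p : Fin m, ∑ t : Fin m, gi p t y * Rlow g gi t p k j y) from rfl]
      exact Dh_sum Finset.univ (fun p _ =>
        (Sm.sum Finset.univ fun t _ =>
          (hgi p t).mul (sm_Rlow g gi hg hgi t p k j)).diff x) a
    have h2 : ∀ p : Fin m, Dh a (fun y => ∑ t : Fin m, gi p t y * Rlow g gi t p k j y) x
        = ∑ t : Fin m, (gi p t x * Dh a (Rlow g gi t p k j) x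
            + Rlow g gi t p k j x * Dh a (gi p t) x) := by
      intro p
      rw [Dh_sum Finset.univ (fun t _ =>
        ((hgi p t).mul (sm_Rlow g gi hg hgi t p k j)).diff x) a]
      exact Finset.sum_congr rfl fun t _ =>
        Dh_mul ((hgi p t).diff x) ((sm_Rlow g gi hg hgi t p k j).diff x) a
    have h3 : ∀ p t : Fin m, Rlow g gi t p k j x * Dh a (gi p t) x
        = ∑ r : Fin m, -(Achr g gi a r p x * gi r t x * Rlow g gi t p k j x) := by
      intro p t
      rw [dgi_h g gi hg hgi hinv1 hinv2 a p t x, mul_neg, Finset.mul_sum,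
        ← Finset.sum_neg_distrib]
      exact Finset.sum_congr rfl fun r _ => by ring
    rw [h1]
    simp only [h2, h3]
    simp only [Finset.sum_add_distrib, Finset.sum_neg_distrib]
    rw [hW, hP1]
    ring
  have hRic2 : ∑ r : Fin m, Achr g gi a j r x * RicSecond g gi k r x = Q2 := by
    rw [hQ2, sum3_rot]
    refine Finset.sum_congr rfl fun r _ => ?_
    rw [show RicSecond g gi k r x
        = ∑ d : Fin m, ∑ l : Fin m, gi d l x * Rlow g gi l d k r x from rfl,
      Finset.mul_sum]
    refine Finset.sum_congr rfl fun d _ => ?_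
    rw [Finset.mul_sum]
    exact Finset.sum_congr rfl fun l _ => by ring
  have permP : P1 = Q1 := by
    rw [hP1, hQ1]
    have e1 : ∀ p t r : Fin m, Achr g gi a r p x * gi r t x * Rlow g gi t p k j x
        = gi r t x * Achr g gi a r p x * Rlow g gi t p k j x := fun p t r => by ring
    simp only [e1]
    rw [sum3_rot]
    exact Finset.sum_congr rfl fun r _ => Finset.sum_comm
  rw [show nabRicSecond g gi a k j x = Dh a (RicSecond g gi k j) x
      - ∑ r : Fin m, Achr g gi a j r x * RicSecond g gi k r x from rfl,
    hDhRic, hRic2, permP]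

end Main6
end Geom

namespace Geom
open Helpers

section Main7
variable {m : ℕ} (g gi : Fin m → Fin m → (Fin m → ℂ) → ℂ)
variable (hg : ∀ k j, Sm (g k j)) (hgi : ∀ k j, Sm (gi k j))
  (hinv1 : ∀ x j q, ∑ k : Fin m, gi j k x * g k q x = if j = q then 1 else 0)
  (hinv2 : ∀ x k j, ∑ q : Fin m, g k q x * gi q j x = if k = j then 1 else 0)

lemma tor_raised_eq (b r lam : Fin m) (x : Fin m → ℂ) :
    ∑ s : Fin m, gi r s x * Tor g s b lam x
      = Achr g gi b lam r x - Achr g gi lam b r x := by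
  calc ∑ s : Fin m, gi r s x * Tor g s b lam x
      = ∑ s : Fin m, (gi r s x * Dh b (g s lam) x - gi r s x * Dh lam (g s b) x) := by
        refine Finset.sum_congr rfl fun s _ => ?_
        rw [show Tor g s b lam x = Dh b (g s lam) x - Dh lam (g s b) x from rfl]
        ring
    _ = (∑ s : Fin m, gi r s x * Dh b (g s lam) x)
        - ∑ s : Fin m, gi r s x * Dh lam (g s b) x := Finset.sum_sub_distrib ..
    _ = Achr g gi b lam r x - Achr g gi lam b r x := rfl

include hgi in
lemma torsion_term_eq (b c : Fin m) (p : Fin m) (x : Fin m → ℂ) :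
    (∑ r : Fin m, ∑ lam : Fin m,
        (∑ s : Fin m, gi r s x * Tor g s b lam x) *
          (∑ t : Fin m, gi lam t x * Rlow g gi t r p c x))
      = ∑ d : Fin m, ∑ l : Fin m, gi d l x *
          (∑ r : Fin m, (Achr g gi b d r x - Achr g gi d b r x) * Rlow g gi l r p c x) := by
  have h1 : ∀ r lam : Fin m,
      (∑ s : Fin m, gi r s x * Tor g s b lam x) *
        (∑ t : Fin m, gi lam t x * Rlow g gi t r p c x)
      = ∑ t : Fin m, gi lam t x * (Achr g gi b lam r x - Achr g gi lam b r x)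
          * Rlow g gi t r p c x := by
    intro r lam
    rw [tor_raised_eq g gi b r lam x, Finset.mul_sum]
    exact Finset.sum_congr rfl fun t _ => by ring
  simp only [h1]
  rw [sum3_rot]
  rw [sum3_rot (F := fun t r lam => gi lam t x
    * (Achr g gi b lam r x - Achr g gi lam b r x) * Rlow g gi t r p c x)]
  refine Finset.sum_congr rfl fun lam _ => Finset.sum_congr rfl fun t _ => ?_
  rw [Finset.mul_sum]
  exact Finset.sum_congr rfl fun r _ => by ring

include hg hgi hinv1 hinv2 in
lemma master (p j q : Fin m) (x : Fin m → ℂ) :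
    lapTor g gi p j q x =
      nabRicSecond g gi q p j x - nabRicSecond g gi j p q x
        + (∑ r : Fin m, ∑ lam : Fin m,
            (∑ s : Fin m, gi r s x * Tor g s q lam x) *
              (∑ t : Fin m, gi lam t x * Rlow g gi t r p j x))
        - (∑ r : Fin m, ∑ lam : Fin m,
            (∑ s : Fin m, gi r s x * Tor g s j lam x) *
              (∑ t : Fin m, gi lam t x * Rlow g gi t r p q x)) := by
  have step1 : lapTor g gi p j q x
      = ∑ d : Fin m, ∑ l : Fin m,
          (gi d l x * nabRlow g gi q l d p j x - gi d l x * nabRlow g gi j l d p q x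
            + gi d l x * (∑ r : Fin m,
                (Achr g gi q d r x - Achr g gi d q r x) * Rlow g gi l r p j x)
            - gi d l x * (∑ r : Fin m,
                (Achr g gi j d r x - Achr g gi d j r x) * Rlow g gi l r p q x)) := by
    rw [show lapTor g gi p j q x
        = ∑ d : Fin m, ∑ l : Fin m, gi d l x * nabNabBarTor g gi d l p j q x from rfl]
    refine Finset.sum_congr rfl fun d _ => Finset.sum_congr rfl fun l _ => ?_
    rw [nabnab_eq g gi hg hgi d l p j q x]
    linear_combination (gi d l x) * (bianchi2 g gi hg hgi hinv1 hinv2 d q l p j x)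
      - (gi d l x) * (bianchi2 g gi hg hgi hinv1 hinv2 d j l p q x)
  rw [step1]
  simp only [Finset.sum_add_distrib, Finset.sum_sub_distrib]
  rw [trace_nabRlow g gi hg hgi hinv1 hinv2 q p j x,
    trace_nabRlow g gi hg hgi hinv1 hinv2 j p q x,
    torsion_term_eq g gi hgi q j p x, torsion_term_eq g gi hgi j q p x]

end Main7
end Geom
/-- For any Hermitian metric (not necessarily conformally balanced), the Chern Laplacian
of the torsion satisfies
`(ΔT)_{p̄jq} = ∇_q R̃_{p̄j} - ∇_j R̃_{p̄q} + T^r{}_{qλ} R^λ{}_{r p̄j} - T^r{}_{jλ} R^λ{}_{r p̄q}`,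
where `Δ = g^{λμ̄} ∇_λ ∇_{μ̄}` and `R̃_{p̄j} = g^{λμ̄} R_{μ̄ λ p̄ j}`. -/
theorem laplacian_torsion_identity (m : ℕ)
    (g gi : Fin m → Fin m → (Fin m → ℂ) → ℂ)
    (hg : ∀ k j, ContDiff ℝ (⊤ : ℕ∞) (g k j))
    (hgi : ∀ k j, ContDiff ℝ (⊤ : ℕ∞) (gi k j))
    (hherm : ∀ k j x, starRingEnd ℂ (g k j x) = g j k x)
    (hinv1 : ∀ x j q, ∑ k : Fin m, gi j k x * g k q x = if j = q then 1 else 0)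
    (hinv2 : ∀ x k j, ∑ q : Fin m, g k q x * gi q j x = if k = j then 1 else 0) :
    ∀ p j q x,
      lapTor g gi p j q x =
        nabRicSecond g gi q p j x - nabRicSecond g gi j p q x
          + (∑ r : Fin m, ∑ lam : Fin m,
              (∑ s : Fin m, gi r s x * Tor g s q lam x) *
                (∑ t : Fin m, gi lam t x * Rlow g gi t r p j x))
          - (∑ r : Fin m, ∑ lam : Fin m,
              (∑ s : Fin m, gi r s x * Tor g s j lam x) *
                (∑ t : Fin m, gi lam t x * Rlow g gi t r p q x)) := by
  intro p j q x
  have hg' : ∀ k j, Helpers.Sm (g k j) := fun k j => (hg k j).of_le (by simp)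
  have hgi' : ∀ k j, Helpers.Sm (gi k j) := fun k j => (hgi k j).of_le (by simp)
  exact Geom.master g gi hg' hgi' hinv1 hinv2 p j q x

end
end

section
/- Let (X, ω) be a Hermitian 3-fold with conformally balanced metric (a = 1). Then the contraction of i∂∂̄ω satisfies g^{mℓ̄}(i∂∂̄ω)_{k̄jℓ̄m} = R̃_{k̄j} - g^{sr̄}g^{mℓ̄} T_{r̄mj} T̄_{sℓ̄k̄}, where (i∂∂̄ω)_{k̄jℓ̄m} = R_{k̄jℓ̄m} - R_{k̄mℓ̄j} + R_{ℓ̄mk̄j} - R_{ℓ̄jk̄m} + g^{sr̄}T_{r̄mj}T̄_{sk̄ℓ̄}. -/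
noncomputable section
open Complex

/-- Components `(i∂∂̄ω)_{k̄ j ℓ̄ n} = ∂_{ℓ̄} T_{k̄ j n} - ∂_{k̄} T_{ℓ̄ j n}`. -/
def iddbarOmega {m : ℕ} (g : Fin m → Fin m → (Fin m → ℂ) → ℂ) (k j l n : Fin m) :
    (Fin m → ℂ) → ℂ :=
  fun x => Da l (Tor g k j n) x - Da k (Tor g l j n) x

section helperlemmas
variable {m : ℕ}

lemma contDiff_fderiv_apply {f : (Fin m → ℂ) → ℂ} (hf : ContDiff ℝ (⊤ : ℕ∞) f) (v : Fin m → ℂ) :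
    ContDiff ℝ (⊤ : ℕ∞) fun z => fderiv ℝ f z v :=
  (ContinuousLinearMap.apply ℝ ℂ v).contDiff.comp (hf.fderiv_right (mod_cast le_top))

lemma contDiff_Dh {f : (Fin m → ℂ) → ℂ} (hf : ContDiff ℝ (⊤ : ℕ∞) f) (j : Fin m) :
    ContDiff ℝ (⊤ : ℕ∞) (Dh j f) := by
  unfold Dh
  exact ((contDiff_fderiv_apply hf _).sub
    (contDiff_const.mul (contDiff_fderiv_apply hf _))).div_const _

lemma contDiff_Da {f : (Fin m → ℂ) → ℂ} (hf : ContDiff ℝ (⊤ : ℕ∞) f) (j : Fin m) :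
    ContDiff ℝ (⊤ : ℕ∞) (Da j f) := by
  unfold Da
  exact ((contDiff_fderiv_apply hf _).add
    (contDiff_const.mul (contDiff_fderiv_apply hf _))).div_const _

variable {f h : (Fin m → ℂ) → ℂ} {x : Fin m → ℂ}

lemma Dh_sub (hf : DifferentiableAt ℝ f x) (hh : DifferentiableAt ℝ h x) (j : Fin m) :
    Dh j (fun y => f y - h y) x = Dh j f x - Dh j h x := by
  unfold Dh
  rw [fderiv_fun_sub hf hh]
  simp only [ContinuousLinearMap.sub_apply]
  ring

lemma Da_sub (hf : DifferentiableAt ℝ f x) (hh : DifferentiableAt ℝ h x) (j : Fin m) :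
    Da j (fun y => f y - h y) x = Da j f x - Da j h x := by
  unfold Da
  rw [fderiv_fun_sub hf hh]
  simp only [ContinuousLinearMap.sub_apply]
  ring

lemma Dh_add (hf : DifferentiableAt ℝ f x) (hh : DifferentiableAt ℝ h x) (j : Fin m) :
    Dh j (fun y => f y + h y) x = Dh j f x + Dh j h x := by
  unfold Dh
  rw [fderiv_fun_add hf hh]
  simp only [ContinuousLinearMap.add_apply]
  ring

lemma Da_add (hf : DifferentiableAt ℝ f x) (hh : DifferentiableAt ℝ h x) (j : Fin m) :
    Da j (fun y => f y + h y) x = Da j f x + Da j h x := by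
  unfold Da
  rw [fderiv_fun_add hf hh]
  simp only [ContinuousLinearMap.add_apply]
  ring

lemma Dh_mul (hf : DifferentiableAt ℝ f x) (hh : DifferentiableAt ℝ h x) (j : Fin m) :
    Dh j (fun y => f y * h y) x = Dh j f x * h x + f x * Dh j h x := by
  unfold Dh
  rw [fderiv_fun_mul hf hh]
  simp only [ContinuousLinearMap.add_apply, ContinuousLinearMap.smul_apply, smul_eq_mul]
  ring

lemma Da_mul (hf : DifferentiableAt ℝ f x) (hh : DifferentiableAt ℝ h x) (j : Fin m) :
    Da j (fun y => f y * h y) x = Da j f x * h x + f x * Da j h x := by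
  unfold Da
  rw [fderiv_fun_mul hf hh]
  simp only [ContinuousLinearMap.add_apply, ContinuousLinearMap.smul_apply, smul_eq_mul]
  ring

lemma Dh_const_mul (hh : DifferentiableAt ℝ h x) (c : ℂ) (j : Fin m) :
    Dh j (fun y => c * h y) x = c * Dh j h x := by
  unfold Dh
  rw [fderiv_const_mul hh c]
  simp only [ContinuousLinearMap.smul_apply, smul_eq_mul]
  ring

lemma Da_const_mul (hh : DifferentiableAt ℝ h x) (c : ℂ) (j : Fin m) :
    Da j (fun y => c * h y) x = c * Da j h x := by
  unfold Da
  rw [fderiv_const_mul hh c]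
  simp only [ContinuousLinearMap.smul_apply, smul_eq_mul]
  ring

lemma Dh_div_const (hh : DifferentiableAt ℝ h x) (c : ℂ) (j : Fin m) :
    Dh j (fun y => h y / c) x = Dh j h x / c := by
  simp only [div_eq_inv_mul]
  exact Dh_const_mul hh c⁻¹ j

lemma Da_div_const (hh : DifferentiableAt ℝ h x) (c : ℂ) (j : Fin m) :
    Da j (fun y => h y / c) x = Da j h x / c := by
  simp only [div_eq_inv_mul]
  exact Da_const_mul hh c⁻¹ j

lemma Dh_const (c : ℂ) (j : Fin m) : Dh j (fun _ => c) x = 0 := by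
  unfold Dh
  simp

lemma Da_const (c : ℂ) (j : Fin m) : Da j (fun _ => c) x = 0 := by
  unfold Da
  simp

lemma Dh_sum {ι : Type*} (s : Finset ι) (F : ι → (Fin m → ℂ) → ℂ)
    (hF : ∀ i ∈ s, DifferentiableAt ℝ (F i) x) (j : Fin m) :
    Dh j (fun y => ∑ i ∈ s, F i y) x = ∑ i ∈ s, Dh j (F i) x := by
  unfold Dh
  rw [fderiv_fun_sum hF]
  simp only [ContinuousLinearMap.coe_sum', Finset.sum_apply, Finset.mul_sum]
  rw [← Finset.sum_sub_distrib, Finset.sum_div]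

lemma Da_sum {ι : Type*} (s : Finset ι) (F : ι → (Fin m → ℂ) → ℂ)
    (hF : ∀ i ∈ s, DifferentiableAt ℝ (F i) x) (j : Fin m) :
    Da j (fun y => ∑ i ∈ s, F i y) x = ∑ i ∈ s, Da j (F i) x := by
  unfold Da
  rw [fderiv_fun_sum hF]
  simp only [ContinuousLinearMap.coe_sum', Finset.sum_apply, Finset.mul_sum]
  rw [← Finset.sum_add_distrib, Finset.sum_div]

lemma Dh_Da_comm (hf : ContDiff ℝ (⊤ : ℕ∞) f) (j k : Fin m) (x : Fin m → ℂ) :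
    Dh j (Da k f) x = Da k (Dh j f) x := by
  have hd : ∀ y, HasFDerivAt f (fderiv ℝ f y) y := fun y =>
    (hf.differentiable (by simp) y).hasFDerivAt
  have hd2 : DifferentiableAt ℝ (fderiv ℝ f) x :=
    (hf.fderiv_right (m := (⊤ : ℕ∞)) (mod_cast le_top)).differentiable (by simp) x
  have hsymm : ∀ v w, fderiv ℝ (fderiv ℝ f) x v w = fderiv ℝ (fderiv ℝ f) x w v :=
    second_derivative_symmetric hd hd2.hasFDerivAt
  have key : ∀ v w : Fin m → ℂ, fderiv ℝ (fun z => fderiv ℝ f z v) x w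
      = fderiv ℝ (fderiv ℝ f) x w v := by
    intro v w
    have h1 : HasFDerivAt (fun z => fderiv ℝ f z v)
        ((ContinuousLinearMap.apply ℝ ℂ v).comp (fderiv ℝ (fderiv ℝ f) x)) x :=
      (ContinuousLinearMap.apply ℝ ℂ v).hasFDerivAt.comp x hd2.hasFDerivAt
    rw [h1.fderiv]
    rfl
  have hA : ∀ v : Fin m → ℂ, DifferentiableAt ℝ (fun z => fderiv ℝ f z v) x :=
    fun v => (contDiff_fderiv_apply hf v).differentiable (by simp) x
  have inner1 : ∀ v : Fin m → ℂ, Dh j (fun z => fderiv ℝ f z v) x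
      = (fderiv ℝ (fderiv ℝ f) x (Pi.single j 1) v
          - Complex.I * fderiv ℝ (fderiv ℝ f) x (Pi.single j Complex.I) v) / 2 := by
    intro v
    unfold Dh
    rw [key, key]
  have inner2 : ∀ v : Fin m → ℂ, Da k (fun z => fderiv ℝ f z v) x
      = (fderiv ℝ (fderiv ℝ f) x (Pi.single k 1) v
          + Complex.I * fderiv ℝ (fderiv ℝ f) x (Pi.single k Complex.I) v) / 2 := by
    intro v
    unfold Da
    rw [key, key]
  calc Dh j (Da k f) x
      = Dh j (fun z => (fderiv ℝ f z (Pi.single k 1)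
          + Complex.I * fderiv ℝ f z (Pi.single k Complex.I)) / 2) x := rfl
    _ = (Dh j (fun z => fderiv ℝ f z (Pi.single k 1)) x
          + Complex.I * Dh j (fun z => fderiv ℝ f z (Pi.single k Complex.I)) x) / 2 := by
        rw [Dh_div_const ((hA _).fun_add ((hA _).const_mul Complex.I)) 2 j,
          Dh_add (hA _) ((hA _).const_mul Complex.I) j,
          Dh_const_mul (hA _) Complex.I j]
    _ = (Da k (fun z => fderiv ℝ f z (Pi.single j 1)) x
          - Complex.I * Da k (fun z => fderiv ℝ f z (Pi.single j Complex.I)) x) / 2 := by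
        rw [inner1, inner1, inner2, inner2,
          hsymm (Pi.single j 1) (Pi.single k 1),
          hsymm (Pi.single j 1) (Pi.single k Complex.I),
          hsymm (Pi.single j Complex.I) (Pi.single k 1),
          hsymm (Pi.single j Complex.I) (Pi.single k Complex.I)]
        ring
    _ = Da k (Dh j f) x := by
        have e : Da k (Dh j f) x = Da k (fun z => (fderiv ℝ f z (Pi.single j 1)
            - Complex.I * fderiv ℝ f z (Pi.single j Complex.I)) / 2) x := rfl
        rw [e, Da_div_const ((hA _).fun_sub ((hA _).const_mul Complex.I)) 2 k,
          Da_sub (hA _) ((hA _).const_mul Complex.I) k,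
          Da_const_mul (hA _) Complex.I k]

end helperlemmas

section sumlemmas
variable {m : ℕ} {x : Fin m → ℂ}

lemma Dh_sum2_mul {F G : Fin m → Fin m → (Fin m → ℂ) → ℂ}
    (hF : ∀ a b, DifferentiableAt ℝ (F a b) x) (hG : ∀ a b, DifferentiableAt ℝ (G a b) x)
    (d : Fin m) :
    Dh d (fun y => ∑ a : Fin m, ∑ b : Fin m, F a b y * G a b y) x
      = ∑ a : Fin m, ∑ b : Fin m, (Dh d (F a b) x * G a b x + F a b x * Dh d (G a b) x) := by
  rw [Dh_sum Finset.univ (fun a => fun y => ∑ b : Fin m, F a b y * G a b y)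
    (fun a _ => DifferentiableAt.fun_sum fun b _ => (hF a b).mul (hG a b)) d]
  refine Finset.sum_congr rfl fun a _ => ?_
  rw [Dh_sum Finset.univ (fun b => fun y => F a b y * G a b y)
    (fun b _ => (hF a b).mul (hG a b)) d]
  exact Finset.sum_congr rfl fun b _ => Dh_mul (hF a b) (hG a b) d

lemma Da_sum2_mul {F G : Fin m → Fin m → (Fin m → ℂ) → ℂ}
    (hF : ∀ a b, DifferentiableAt ℝ (F a b) x) (hG : ∀ a b, DifferentiableAt ℝ (G a b) x)
    (d : Fin m) :
    Da d (fun y => ∑ a : Fin m, ∑ b : Fin m, F a b y * G a b y) x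
      = ∑ a : Fin m, ∑ b : Fin m, (Da d (F a b) x * G a b x + F a b x * Da d (G a b) x) := by
  rw [Da_sum Finset.univ (fun a => fun y => ∑ b : Fin m, F a b y * G a b y)
    (fun a _ => DifferentiableAt.fun_sum fun b _ => (hF a b).mul (hG a b)) d]
  refine Finset.sum_congr rfl fun a _ => ?_
  rw [Da_sum Finset.univ (fun b => fun y => F a b y * G a b y)
    (fun b _ => (hF a b).mul (hG a b)) d]
  exact Finset.sum_congr rfl fun b _ => Da_mul (hF a b) (hG a b) d

variable (g gi : Fin m → Fin m → (Fin m → ℂ) → ℂ)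

lemma Dh_gi (hg : ∀ k j, ContDiff ℝ (⊤ : ℕ∞) (g k j)) (hgi : ∀ k j, ContDiff ℝ (⊤ : ℕ∞) (gi k j))
    (hinv1 : ∀ x j q, ∑ k : Fin m, gi j k x * g k q x = if j = q then 1 else 0)
    (hinv2 : ∀ x k j, ∑ q : Fin m, g k q x * gi q j x = if k = j then 1 else 0)
    (d a b : Fin m) (x : Fin m → ℂ) :
    Dh d (gi a b) x = -∑ q : Fin m, ∑ c : Fin m, gi a c x * Dh d (g c q) x * gi q b x := by
  have hdg : ∀ a b, DifferentiableAt ℝ (g a b) x := fun a b => (hg a b).differentiable (by simp) x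
  have hdgi : ∀ a b, DifferentiableAt ℝ (gi a b) x :=
    fun a b => (hgi a b).differentiable (by simp) x
  have hkey : ∀ q : Fin m,
      ∑ c : Fin m, (Dh d (gi a c) x * g c q x + gi a c x * Dh d (g c q) x) = 0 := by
    intro q
    have h2 : (fun y => ∑ c : Fin m, gi a c y * g c q y)
        = (fun _ => if a = q then (1 : ℂ) else 0) := funext fun y => hinv1 y a q
    calc ∑ c : Fin m, (Dh d (gi a c) x * g c q x + gi a c x * Dh d (g c q) x)
        = ∑ c : Fin m, Dh d (fun y => gi a c y * g c q y) x :=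
          Finset.sum_congr rfl fun c _ => (Dh_mul (hdgi a c) (hdg c q) d).symm
      _ = Dh d (fun y => ∑ c : Fin m, gi a c y * g c q y) x :=
          (Dh_sum Finset.univ _ (fun c _ => (hdgi a c).mul (hdg c q)) d).symm
      _ = 0 := by rw [h2]; exact Dh_const _ d
  have step : ∀ q : Fin m, ∑ c : Fin m, Dh d (gi a c) x * g c q x
      = -∑ c : Fin m, gi a c x * Dh d (g c q) x := by
    intro q
    have := hkey q
    rw [Finset.sum_add_distrib] at this
    linear_combination this
  calc Dh d (gi a b) x
      = ∑ c : Fin m, Dh d (gi a c) x * (if c = b then (1 : ℂ) else 0) := by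
        simp [Finset.sum_ite_eq', Finset.mem_univ]
    _ = ∑ c : Fin m, Dh d (gi a c) x * ∑ q : Fin m, g c q x * gi q b x := by
        simp_rw [hinv2]
    _ = ∑ q : Fin m, (∑ c : Fin m, Dh d (gi a c) x * g c q x) * gi q b x := by
        simp_rw [Finset.mul_sum, Finset.sum_mul]
        rw [Finset.sum_comm]
        simp [mul_assoc]
    _ = -∑ q : Fin m, ∑ c : Fin m, gi a c x * Dh d (g c q) x * gi q b x := by
        simp_rw [step]
        simp [Finset.sum_mul, Finset.mul_sum, mul_assoc]

lemma Da_gi (hg : ∀ k j, ContDiff ℝ (⊤ : ℕ∞) (g k j)) (hgi : ∀ k j, ContDiff ℝ (⊤ : ℕ∞) (gi k j))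
    (hinv1 : ∀ x j q, ∑ k : Fin m, gi j k x * g k q x = if j = q then 1 else 0)
    (hinv2 : ∀ x k j, ∑ q : Fin m, g k q x * gi q j x = if k = j then 1 else 0)
    (d a b : Fin m) (x : Fin m → ℂ) :
    Da d (gi a b) x = -∑ q : Fin m, ∑ c : Fin m, gi a c x * Da d (g c q) x * gi q b x := by
  have hdg : ∀ a b, DifferentiableAt ℝ (g a b) x := fun a b => (hg a b).differentiable (by simp) x
  have hdgi : ∀ a b, DifferentiableAt ℝ (gi a b) x :=
    fun a b => (hgi a b).differentiable (by simp) x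
  have hkey : ∀ q : Fin m,
      ∑ c : Fin m, (Da d (gi a c) x * g c q x + gi a c x * Da d (g c q) x) = 0 := by
    intro q
    have h2 : (fun y => ∑ c : Fin m, gi a c y * g c q y)
        = (fun _ => if a = q then (1 : ℂ) else 0) := funext fun y => hinv1 y a q
    calc ∑ c : Fin m, (Da d (gi a c) x * g c q x + gi a c x * Da d (g c q) x)
        = ∑ c : Fin m, Da d (fun y => gi a c y * g c q y) x :=
          Finset.sum_congr rfl fun c _ => (Da_mul (hdgi a c) (hdg c q) d).symm
      _ = Da d (fun y => ∑ c : Fin m, gi a c y * g c q y) x :=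
          (Da_sum Finset.univ _ (fun c _ => (hdgi a c).mul (hdg c q)) d).symm
      _ = 0 := by rw [h2]; exact Da_const _ d
  have step : ∀ q : Fin m, ∑ c : Fin m, Da d (gi a c) x * g c q x
      = -∑ c : Fin m, gi a c x * Da d (g c q) x := by
    intro q
    have := hkey q
    rw [Finset.sum_add_distrib] at this
    linear_combination this
  calc Da d (gi a b) x
      = ∑ c : Fin m, Da d (gi a c) x * (if c = b then (1 : ℂ) else 0) := by
        simp [Finset.sum_ite_eq', Finset.mem_univ]
    _ = ∑ c : Fin m, Da d (gi a c) x * ∑ q : Fin m, g c q x * gi q b x := by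
        simp_rw [hinv2]
    _ = ∑ q : Fin m, (∑ c : Fin m, Da d (gi a c) x * g c q x) * gi q b x := by
        simp_rw [Finset.mul_sum, Finset.sum_mul]
        rw [Finset.sum_comm]
        simp [mul_assoc]
    _ = -∑ q : Fin m, ∑ c : Fin m, gi a c x * Da d (g c q) x * gi q b x := by
        simp_rw [step]
        simp [Finset.sum_mul, Finset.mul_sum, mul_assoc]

end sumlemmas

set_option maxHeartbeats 4000000 in
/-- On a Hermitian 3-fold with conformally balanced metric (`a = 1`, expressed via the
equivalent torsion constraints, with `u = ‖Ω‖_ω`), one has the local coordinate formula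
`(i∂∂̄ω)_{k̄jℓ̄m} = R_{k̄jℓ̄m} - R_{k̄mℓ̄j} + R_{ℓ̄mk̄j} - R_{ℓ̄jk̄m} + g^{sr̄} T_{r̄mj} T̄_{sk̄ℓ̄}`
(valid for any Hermitian metric), and its contraction satisfies
`g^{mℓ̄}(i∂∂̄ω)_{k̄jℓ̄m} = R̃_{k̄j} - g^{sr̄} g^{mℓ̄} T_{r̄mj} T̄_{sℓ̄k̄}`. -/
theorem iddbar_omega_contraction_conformally_balanced
    (g gi : Fin 3 → Fin 3 → (Fin 3 → ℂ) → ℂ)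
    (hg : ∀ k j, ContDiff ℝ (⊤ : ℕ∞) (g k j))
    (hgi : ∀ k j, ContDiff ℝ (⊤ : ℕ∞) (gi k j))
    (hherm : ∀ k j x, starRingEnd ℂ (g k j x) = g j k x)
    (hinv1 : ∀ x j q, ∑ k : Fin 3, gi j k x * g k q x = if j = q then 1 else 0)
    (hinv2 : ∀ x k j, ∑ q : Fin 3, g k q x * gi q j x = if k = j then 1 else 0)
    (u : (Fin 3 → ℂ) → ℂ) (hu : ContDiff ℝ (⊤ : ℕ∞) u) (hu0 : ∀ x, u x ≠ 0)
    (hud : ∀ j x, Dh j u x =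
      -(1 / 2 : ℂ) * u x * ∑ p : Fin 3, ∑ q : Fin 3, gi q p x * Dh j (g p q) x)
    (hudb : ∀ j x, Da j u x =
      -(1 / 2 : ℂ) * u x * ∑ p : Fin 3, ∑ q : Fin 3, gi q p x * Da j (g p q) x)
    (hcb1 : ∀ q x, u x * Ttr g gi q x = Dh q u x)
    (hcb2 : ∀ q x, u x * TtrB g gi q x = Da q u x) :
    (∀ k j l n x,
      iddbarOmega g k j l n x =
        Rlow g gi k j l n x - Rlow g gi k n l j x + Rlow g gi l n k j x
          - Rlow g gi l j k n x
          + ∑ s : Fin 3, ∑ r : Fin 3, gi s r x * Tor g r n j x * TorB g s k l x) ∧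
    (∀ k j x,
      (∑ n : Fin 3, ∑ l : Fin 3, gi n l x * iddbarOmega g k j l n x) =
        RicSecond g gi k j x -
          ∑ s : Fin 3, ∑ r : Fin 3, ∑ n : Fin 3, ∑ l : Fin 3,
            gi s r x * gi n l x * Tor g r n j x * TorB g s l k x) := by
  have hDg : ∀ (e a b : Fin 3), ContDiff ℝ (⊤ : ℕ∞) (Dh e (g a b)) := fun e a b => contDiff_Dh (hg a b) e
  have hDag : ∀ (e a b : Fin 3), ContDiff ℝ (⊤ : ℕ∞) (Da e (g a b)) := fun e a b => contDiff_Da (hg a b) e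
  have part1 : ∀ k j l n x,
      iddbarOmega g k j l n x =
        Rlow g gi k j l n x - Rlow g gi k n l j x + Rlow g gi l n k j x
          - Rlow g gi l j k n x
          + ∑ s : Fin 3, ∑ r : Fin 3, gi s r x * Tor g r n j x * TorB g s k l x := by
    intro k j l n x
    have d1 : ∀ (e a b : Fin 3), DifferentiableAt ℝ (Dh e (g a b)) x :=
      fun e a b => (hDg e a b).differentiable (by simp) x
    have ht : ∀ (d kv jv nv : Fin 3), Da d (Tor g kv jv nv) x
        = Da d (Dh jv (g kv nv)) x - Da d (Dh nv (g kv jv)) x :=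
      fun d kv jv nv => Da_sub (d1 jv kv nv) (d1 nv kv jv) d
    show Da l (Tor g k j n) x - Da k (Tor g l j n) x = _
    rw [ht l k j n, ht k l j n]
    simp only [Rlow, Tor, TorB, Fin.sum_univ_three]
    ring
  refine ⟨part1, ?_⟩
  intro k j x
  have hdgi : ∀ (a b : Fin 3), DifferentiableAt ℝ (gi a b) x :=
    fun a b => (hgi a b).differentiable (by simp) x
  have hdDh : ∀ (e a b : Fin 3), DifferentiableAt ℝ (Dh e (g a b)) x :=
    fun e a b => (hDg e a b).differentiable (by simp) x
  have hdDa : ∀ (e a b : Fin 3), DifferentiableAt ℝ (Da e (g a b)) x :=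
    fun e a b => (hDag e a b).differentiable (by simp) x
  have hdTor : ∀ (b a q : Fin 3), DifferentiableAt ℝ (Tor g b a q) x :=
    fun b a q => (hdDh a b q).sub (hdDh q b a)
  have hdTorB : ∀ (a b q : Fin 3), DifferentiableAt ℝ (TorB g a b q) x :=
    fun a b q => (hdDa b q a).sub (hdDa q b a)
  have hDhgi : ∀ (d a b : Fin 3), Dh d (gi a b) x
      = -∑ q : Fin 3, ∑ c : Fin 3, gi a c x * Dh d (g c q) x * gi q b x :=
    fun d a b => Dh_gi g gi hg hgi hinv1 hinv2 d a b x
  have hDagi : ∀ (d a b : Fin 3), Da d (gi a b) x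
      = -∑ q : Fin 3, ∑ c : Fin 3, gi a c x * Da d (g c q) x * gi q b x :=
    fun d a b => Da_gi g gi hg hgi hinv1 hinv2 d a b x
  have comm : ∀ (e d a b : Fin 3), Dh e (Da d (g a b)) x = Da d (Dh e (g a b)) x :=
    fun e d a b => Dh_Da_comm (hg a b) e d x
  have hTfun : Ttr g gi j
      = fun y => -(1 / 2 : ℂ) * ∑ p : Fin 3, ∑ q : Fin 3, gi q p y * Dh j (g p q) y :=
    funext fun y => mul_left_cancel₀ (hu0 y) (by rw [hcb1 j y, hud j y]; ring)
  have hTBfun : TtrB g gi k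
      = fun y => -(1 / 2 : ℂ) * ∑ p : Fin 3, ∑ q : Fin 3, gi q p y * Da k (g p q) y :=
    funext fun y => mul_left_cancel₀ (hu0 y) (by rw [hcb2 k y, hudb k y]; ring)
  have hLdiff : DifferentiableAt ℝ
      (fun y => ∑ p : Fin 3, ∑ q : Fin 3, gi q p y * Dh j (g p q) y) x :=
    DifferentiableAt.fun_sum fun p _ => DifferentiableAt.fun_sum fun q _ => (hdgi q p).mul (hdDh j p q)
  have hLbdiff : DifferentiableAt ℝ
      (fun y => ∑ p : Fin 3, ∑ q : Fin 3, gi q p y * Da k (g p q) y) x :=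
    DifferentiableAt.fun_sum fun p _ => DifferentiableAt.fun_sum fun q _ => (hdgi q p).mul (hdDa k p q)
  have Eq1 : Da k (Ttr g gi j) x
      = -(1 / 2 : ℂ) * Da k (fun y => ∑ p : Fin 3, ∑ q : Fin 3, gi q p y * Dh j (g p q) y) x := by
    rw [hTfun]
    exact Da_const_mul hLdiff _ k
  have Eq2 : Dh j (TtrB g gi k) x
      = -(1 / 2 : ℂ) * Dh j (fun y => ∑ p : Fin 3, ∑ q : Fin 3, gi q p y * Da k (g p q) y) x := by
    rw [hTBfun]
    exact Dh_const_mul hLbdiff _ j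
  have EL1 : Da k (Ttr g gi j) x = ∑ a : Fin 3, ∑ b : Fin 3,
      (Da k (gi a b) x * Tor g b a j x + gi a b x * Da k (Tor g b a j) x) :=
    Da_sum2_mul (F := gi) (G := fun a b => Tor g b a j)
      (fun a b => hdgi a b) (fun a b => hdTor b a j) k
  have ER1 : Da k (fun y => ∑ p : Fin 3, ∑ q : Fin 3, gi q p y * Dh j (g p q) y) x
      = ∑ p : Fin 3, ∑ q : Fin 3,
        (Da k (gi q p) x * Dh j (g p q) x + gi q p x * Da k (Dh j (g p q)) x) :=
    Da_sum2_mul (F := fun p q => gi q p) (G := fun p q => Dh j (g p q))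
      (fun p q => hdgi q p) (fun p q => hdDh j p q) k
  have EL2 : Dh j (TtrB g gi k) x = ∑ a : Fin 3, ∑ b : Fin 3,
      (Dh j (gi a b) x * TorB g a b k x + gi a b x * Dh j (TorB g a b k) x) :=
    Dh_sum2_mul (F := gi) (G := fun a b => TorB g a b k)
      (fun a b => hdgi a b) (fun a b => hdTorB a b k) j
  have ER2 : Dh j (fun y => ∑ p : Fin 3, ∑ q : Fin 3, gi q p y * Da k (g p q) y) x
      = ∑ p : Fin 3, ∑ q : Fin 3,
        (Dh j (gi q p) x * Da k (g p q) x + gi q p x * Dh j (Da k (g p q)) x) :=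
    Dh_sum2_mul (F := fun p q => gi q p) (G := fun p q => Da k (g p q))
      (fun p q => hdgi q p) (fun p q => hdDa k p q) j
  have hDaTor : ∀ (d b a q : Fin 3), Da d (Tor g b a q) x
      = Da d (Dh a (g b q)) x - Da d (Dh q (g b a)) x :=
    fun d b a q => Da_sub (hdDh a b q) (hdDh q b a) d
  have hDhTorB : ∀ (d a b q : Fin 3), Dh d (TorB g a b q) x
      = Dh d (Da b (g q a)) x - Dh d (Da q (g b a)) x :=
    fun d a b q => Dh_sub (hdDa b q a) (hdDa q b a) d
  rw [EL1, ER1] at Eq1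
  rw [EL2, ER2] at Eq2
  simp only [hDaTor, hDagi] at Eq1
  simp only [hDhTorB, hDhgi, comm] at Eq2
  simp only [Tor, TorB] at Eq1 Eq2
  simp only [part1, Rlow, RicSecond, Tor, TorB]
  simp only [Fin.sum_univ_three] at Eq1 Eq2 ⊢
  linear_combination Eq1 + Eq2

end
end
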